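/- Let τ be a triangular norm without nilpotent elements, and let (X₁, μ₁) and (X₂, μ₂) be bounded fuzzy lattices with bottoms 0₁, 0₂, tops 1₁, 1₂, and chosen operations ⊙₁, ⊕₁ and ⊙₂, ⊕₂ giving fuzzy meets and joins. Define μ_p on X₁ × X₂ by μ_p((x₁,x₂),(y₁,y₂)) = τ(μ₁(x₁,y₁), μ₂(x₂,y₂)). Then μ_p is a fuzzy partial order; the coordinatewise meet (x₁ ⊙₁ y₁, x₂ ⊙₂ y₂) is a fuzzy meet and the coordinatewise join (x₁ ⊕₁ y₁, x₂ ⊕₂ y₂) is a fuzzy join of (x₁,x₂) and (y₁,y₂) with respect to μ_p; and μ_p((0₁,0₂),(x₁,x₂)) > 0 and μ_p((x₁,x₂),(1₁,1₂)) > 0 for all (x₁,x₂). -/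
import Mathlib


/-- A fuzzy partial order on `X`: a `[0,1]`-valued relation that is reflexive,
(preference-sensitively) transitive, and antisymmetric. -/
def IsFuzzyOrder {X : Type*} (μ : X → X → ℝ) : Prop :=
  (∀ x y, μ x y ∈ Set.Icc (0:ℝ) 1) ∧
  (∀ x, μ x x = 1) ∧
  (∀ x y z, 0 < μ x y → 0 < μ y z → 0 < μ x z) ∧
  (∀ x y, 0 < μ x y → 0 < μ y x → x = y)

/-- `m` is a fuzzy meet (greatest fuzzy lower bound) of `x` and `y`. -/
def IsFuzzyMeet {X : Type*} (μ : X → X → ℝ) (x y m : X) : Prop :=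
  0 < μ m x ∧ 0 < μ m y ∧ ∀ z, 0 < μ z x → 0 < μ z y → 0 < μ z m

/-- `j` is a fuzzy join (least fuzzy upper bound) of `x` and `y`. -/
def IsFuzzyJoin {X : Type*} (μ : X → X → ℝ) (x y j : X) : Prop :=
  0 < μ x j ∧ 0 < μ y j ∧ ∀ w, 0 < μ x w → 0 < μ y w → 0 < μ j w

/-- A triangular norm on `[0,1]` (represented as a real-valued binary map on `[0,1]`). -/
structure IsTNorm (τ : ℝ → ℝ → ℝ) : Prop where
  mem : ∀ a ∈ Set.Icc (0:ℝ) 1, ∀ b ∈ Set.Icc (0:ℝ) 1, τ a b ∈ Set.Icc (0:ℝ) 1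
  assoc : ∀ a ∈ Set.Icc (0:ℝ) 1, ∀ b ∈ Set.Icc (0:ℝ) 1, ∀ c ∈ Set.Icc (0:ℝ) 1,
    τ a (τ b c) = τ (τ a b) c
  mono : ∀ a ∈ Set.Icc (0:ℝ) 1, ∀ b ∈ Set.Icc (0:ℝ) 1, ∀ c ∈ Set.Icc (0:ℝ) 1,
    b ≤ c → τ a b ≤ τ a c
  comm : ∀ a ∈ Set.Icc (0:ℝ) 1, ∀ b ∈ Set.Icc (0:ℝ) 1, τ a b = τ b a
  unit : ∀ a ∈ Set.Icc (0:ℝ) 1, τ a 1 = a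

/-- `τ` has a zero divisor: some `a ∈ (0,1)` with `τ a b = 0` for some `b ∈ (0,1)`. -/
def HasZeroDivisorTNorm (τ : ℝ → ℝ → ℝ) : Prop :=
  ∃ a ∈ Set.Ioo (0:ℝ) 1, ∃ b ∈ Set.Ioo (0:ℝ) 1, τ a b = 0

/-- `tnormPow τ a n` is the `(n+1)`-st τ-power `a^(n+1)` of `a`:
`a^(1) = a` and `a^(n+1) = τ (a^(n)) a`. -/
def tnormPow (τ : ℝ → ℝ → ℝ) (a : ℝ) : ℕ → ℝ
  | 0 => a
  | n + 1 => τ (tnormPow τ a n) a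

/-- `τ` has a nilpotent element: some `a ∈ (0,1)` with `a^(n) = 0` for some positive `n`. -/
def HasNilpotentTNorm (τ : ℝ → ℝ → ℝ) : Prop :=
  ∃ a ∈ Set.Ioo (0:ℝ) 1, ∃ n : ℕ, tnormPow τ a n = 0


lemma tnorm_pos_iff {τ : ℝ → ℝ → ℝ} (hτ : IsTNorm τ) (hnil : ¬ HasNilpotentTNorm τ)
    {a b : ℝ} (ha : a ∈ Set.Icc (0:ℝ) 1) (hb : b ∈ Set.Icc (0:ℝ) 1) :
    0 < τ a b ↔ 0 < a ∧ 0 < b := by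
  have h01 : (1:ℝ) ∈ Set.Icc (0:ℝ) 1 := by constructor <;> norm_num
  constructor
  · intro h
    have hle1 : τ a b ≤ a := by
      have := hτ.mono a ha b hb 1 h01 hb.2
      rwa [hτ.unit a ha] at this
    have hle2 : τ a b ≤ b := by
      have := hτ.mono b hb a ha 1 h01 ha.2
      rw [hτ.unit b hb, hτ.comm b hb a ha] at this
      exact this
    exact ⟨lt_of_lt_of_le h hle1, lt_of_lt_of_le h hle2⟩
  · rintro ⟨ha0, hb0⟩
    by_contra h
    have hmem := hτ.mem a ha b hb
    have heq : τ a b = 0 := le_antisymm (not_lt.1 h) hmem.1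
    rcases eq_or_lt_of_le ha.2 with h1 | ha1
    · subst h1
      rw [hτ.comm 1 h01 b hb, hτ.unit b hb] at heq
      exact hb0.ne' heq
    rcases eq_or_lt_of_le hb.2 with h1 | hb1
    · subst h1
      rw [hτ.unit a ha] at heq
      exact ha0.ne' heq
    set c := min a b with hc
    have hc0 : 0 < c := lt_min ha0 hb0
    have hc1 : c < 1 := lt_of_le_of_lt (min_le_left a b) ha1
    have hcm : c ∈ Set.Icc (0:ℝ) 1 := ⟨le_of_lt hc0, le_of_lt hc1⟩
    have h1 : τ c c ≤ τ c b := hτ.mono c hcm c hcm b hb (min_le_right a b)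
    have h2 : τ c b ≤ τ a b := by
      rw [hτ.comm c hcm b hb, hτ.comm a ha b hb]
      exact hτ.mono b hb c hcm a ha (min_le_left a b)
    have hcc : τ c c = 0 :=
      le_antisymm (heq ▸ le_trans h1 h2) (hτ.mem c hcm c hcm).1
    exact hnil ⟨c, ⟨hc0, hc1⟩, 1, by simpa [tnormPow] using hcc⟩

theorem tnorm_no_nilpotent_product_bounded_fuzzy_lattice {X₁ X₂ : Type*}
    (τ : ℝ → ℝ → ℝ) (hτ : IsTNorm τ) (hnil : ¬ HasNilpotentTNorm τ)
    (μ₁ : X₁ → X₁ → ℝ) (μ₂ : X₂ → X₂ → ℝ)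
    (h₁ : IsFuzzyOrder μ₁) (h₂ : IsFuzzyOrder μ₂)
    (bot₁ top₁ : X₁) (bot₂ top₂ : X₂)
    (hbot₁ : ∀ x, 0 < μ₁ bot₁ x) (htop₁ : ∀ x, 0 < μ₁ x top₁)
    (hbot₂ : ∀ x, 0 < μ₂ bot₂ x) (htop₂ : ∀ x, 0 < μ₂ x top₂)
    (meet₁ join₁ : X₁ → X₁ → X₁) (meet₂ join₂ : X₂ → X₂ → X₂)
    (hmeet₁ : ∀ x y, IsFuzzyMeet μ₁ x y (meet₁ x y))
    (hjoin₁ : ∀ x y, IsFuzzyJoin μ₁ x y (join₁ x y))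
    (hmeet₂ : ∀ x y, IsFuzzyMeet μ₂ x y (meet₂ x y))
    (hjoin₂ : ∀ x y, IsFuzzyJoin μ₂ x y (join₂ x y)) :
    IsFuzzyOrder (fun p q : X₁ × X₂ => τ (μ₁ p.1 q.1) (μ₂ p.2 q.2)) ∧
    (∀ p q : X₁ × X₂, IsFuzzyMeet (fun p q : X₁ × X₂ => τ (μ₁ p.1 q.1) (μ₂ p.2 q.2))
      p q (meet₁ p.1 q.1, meet₂ p.2 q.2)) ∧
    (∀ p q : X₁ × X₂, IsFuzzyJoin (fun p q : X₁ × X₂ => τ (μ₁ p.1 q.1) (μ₂ p.2 q.2))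
      p q (join₁ p.1 q.1, join₂ p.2 q.2)) ∧
    (∀ p : X₁ × X₂, 0 < τ (μ₁ bot₁ p.1) (μ₂ bot₂ p.2)) ∧
    (∀ p : X₁ × X₂, 0 < τ (μ₁ p.1 top₁) (μ₂ p.2 top₂)) := by
  
  obtain ⟨m₁, r₁, t₁, a₁⟩ := h₁
  obtain ⟨m₂, r₂, t₂, a₂⟩ := h₂
  have key : ∀ (x y : X₁) (u v : X₂), 0 < τ (μ₁ x y) (μ₂ u v) ↔ 0 < μ₁ x y ∧ 0 < μ₂ u v :=
    fun x y u v => tnorm_pos_iff hτ hnil (m₁ x y) (m₂ u v)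
  refine ⟨⟨?_, ?_, ?_, ?_⟩, ?_, ?_, ?_, ?_⟩
  · intro p q
    exact hτ.mem _ (m₁ p.1 q.1) _ (m₂ p.2 q.2)
  · intro p
    simp only [r₁, r₂]
    exact hτ.unit 1 ⟨zero_le_one, le_refl 1⟩
  · intro p q r hpq hqr
    rw [key] at hpq hqr ⊢
    exact ⟨t₁ _ _ _ hpq.1 hqr.1, t₂ _ _ _ hpq.2 hqr.2⟩
  · intro p q hpq hqp
    rw [key] at hpq hqp
    exact Prod.ext (a₁ _ _ hpq.1 hqp.1) (a₂ _ _ hpq.2 hqp.2)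
  · intro p q
    obtain ⟨e1, e2, e3⟩ := hmeet₁ p.1 q.1
    obtain ⟨f1, f2, f3⟩ := hmeet₂ p.2 q.2
    refine ⟨(key _ _ _ _).2 ⟨e1, f1⟩, (key _ _ _ _).2 ⟨e2, f2⟩, ?_⟩
    intro z hz1 hz2
    rw [key] at hz1 hz2 ⊢
    exact ⟨e3 _ hz1.1 hz2.1, f3 _ hz1.2 hz2.2⟩
  · intro p q
    obtain ⟨e1, e2, e3⟩ := hjoin₁ p.1 q.1
    obtain ⟨f1, f2, f3⟩ := hjoin₂ p.2 q.2
    refine ⟨(key _ _ _ _).2 ⟨e1, f1⟩, (key _ _ _ _).2 ⟨e2, f2⟩, ?_⟩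
    intro w hw1 hw2
    rw [key] at hw1 hw2 ⊢
    exact ⟨e3 _ hw1.1 hw2.1, f3 _ hw1.2 hw2.2⟩
  · intro p
    exact (key _ _ _ _).2 ⟨hbot₁ p.1, hbot₂ p.2⟩
  · intro p
    exact (key _ _ _ _).2 ⟨htop₁ p.1, htop₂ p.2⟩
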